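/- Under the assumption that the single-layer operator S : H^{−1/2}(C_R) → H^{1/2}_0(C_R) is injective (which follows from uniqueness in D_R and Σ_R): if S φ = 0 then the associated single-layer potential u vanishes in all of D and consequently the density φ = 0. -/

import Mathlib

open MeasureTheory Complex Real Filter ComplexConjugate

noncomputable section

/-- Partial derivative in the `x₁`-direction. -/
def d1 (u : ℝ × ℝ → ℂ) (x : ℝ × ℝ) : ℂ := fderiv ℝ u x (1, 0)

/-- Partial derivative in the `x₂`-direction. -/
def d2 (u : ℝ × ℝ → ℂ) (x : ℝ × ℝ) : ℂ := fderiv ℝ u x (0, 1)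

/-- Laplacian of a complex-valued function on `ℝ²`. -/
def lap (u : ℝ × ℝ → ℂ) (x : ℝ × ℝ) : ℂ := d1 (d1 u) x + d2 (d2 u) x

/-- The (Euclidean) distance from `x` to the point `(π, 0)`. -/
def dist2 (x : ℝ × ℝ) : ℝ := Real.sqrt ((x.1 - π) ^ 2 + x.2 ^ 2)

/-- `∇v · conj ∇ψ`. -/
def gradDot (v ψ : ℝ × ℝ → ℂ) (x : ℝ × ℝ) : ℂ :=
  d1 v x * conj (d1 ψ x) + d2 v x * conj (d2 ψ x)

/-- Membership in (a proxy for) the Sobolev space `H¹(D)`: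
the function and its (full) derivative are square integrable on `D`. -/
def MemH1 (D : Set (ℝ × ℝ)) (u : ℝ × ℝ → ℂ) : Prop :=
  MemLp u 2 (volume.restrict D) ∧ MemLp (fun x => fderiv ℝ u x) 2 (volume.restrict D)

/-- Squared `H¹(D)`-norm. -/
def H1normSq (D : Set (ℝ × ℝ)) (u : ℝ × ℝ → ℂ) : ℝ :=
  ((eLpNorm u 2 (volume.restrict D)).toReal) ^ 2
    + ((eLpNorm (fun x => fderiv ℝ u x) 2 (volume.restrict D)).toReal) ^ 2

/-- Exponential weight `e^{ρ|x|}`. -/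
def w (ρ : ℝ) (x : ℝ × ℝ) : ℝ := Real.exp (ρ * Real.sqrt (x.1 ^ 2 + x.2 ^ 2))

/-- The square-root branch holomorphic in `ℂ ∖ (i·ℝ≤0)`, applied to a real number:
`√t = i √|t|` for `t < 0`. -/
def sqrtBranch (t : ℝ) : ℂ :=
  if 0 ≤ t then ((Real.sqrt t : ℝ) : ℂ) else I * ((Real.sqrt (-t) : ℝ) : ℂ)

/-- Radial derivative `∂v/∂r` with respect to the center `(π,0)`. -/
def rDeriv (v : ℝ × ℝ → ℂ) (x : ℝ × ℝ) : ℂ :=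
  fderiv ℝ v x ((x.1 - π) / dist2 x, x.2 / dist2 x)

/-
Since `Sφ = u|_{C_R} = 0`, the restriction of `u` to `D_R` is a Dirichlet solution of the
Helmholtz equation, and its restriction to `Σ_R` is a radiating solution with zero boundary
data; the two uniqueness hypotheses make `u` vanish on both pieces, hence on all of `D`.
Then `∇u = 0` on the open set `D`, so the variational identity gives `φ (Tr ψ) = 0` for every
test function `ψ`, and these traces exhaust `G`.
-/

theorem continuous_dist2 : Continuous dist2 := by
  unfold dist2
  fun_prop

theorem snd_le_dist2 (x : ℝ × ℝ) : x.2 ≤ dist2 x :=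
  (le_abs_self _).trans (Real.abs_le_sqrt (by nlinarith [sq_nonneg (x.1 - π)]))

theorem MemH1.mono {s t : Set (ℝ × ℝ)} {u : ℝ × ℝ → ℂ} (h : MemH1 t u) (hst : s ⊆ t) :
    MemH1 s u :=
  ⟨h.1.mono_measure (Measure.restrict_mono hst le_rfl),
    h.2.mono_measure (Measure.restrict_mono hst le_rfl)⟩

theorem IsOpen.frontier_inter_subset_union {X : Type*} [TopologicalSpace X] {s : Set X}
    (hs : IsOpen s) (t : Set X) : frontier (s ∩ t) ⊆ frontier s ∪ s ∩ frontier t := by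
  intro x hx
  rcases _root_.frontier_inter_subset s t hx with ⟨hxs, -⟩ | ⟨hxs, hxt⟩
  · exact Or.inl hxs
  · by_cases hx : x ∈ s
    · exact Or.inr ⟨hx, hxt⟩
    · exact Or.inl (hs.frontier_eq ▸ ⟨hxs, hx⟩)

theorem fderiv_eq_zero_of_forall_mem_eq_zero {𝕜 E F : Type*} [NontriviallyNormedField 𝕜]
    [NormedAddCommGroup E] [NormedSpace 𝕜 E] [NormedAddCommGroup F] [NormedSpace 𝕜 F]
    {s : Set E} (hs : IsOpen s) {u : E → F} (hu : ∀ x ∈ s, u x = 0) {x : E} (hx : x ∈ s) :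
    fderiv 𝕜 u x = 0 := by
  rw [(Filter.eventuallyEq_of_mem (hs.mem_nhds hx) hu).fderiv_eq, fderiv_const_apply]

theorem gradDot_eq_zero_of_fderiv_eq_zero {v : ℝ × ℝ → ℂ} {x : ℝ × ℝ}
    (hv : fderiv ℝ v x = 0) (ψ : ℝ × ℝ → ℂ) : gradDot v ψ x = 0 := by
  simp [gradDot, d1, d2, hv]

theorem statement12_general {G : Type*} [NormedAddCommGroup G] [NormedSpace ℂ G]
    (k R : ℝ)
    (D : Set (ℝ × ℝ)) (hDopen : IsOpen D)
    (RC : (ℝ × ℝ → ℂ) → Prop)     -- the open waveguide radiation condition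
    (Tr : (ℝ × ℝ → ℂ) → G)        -- trace onto `H^{1/2}₀(C_R)`
    -- traces of compactly supported `H¹₀(D)`-functions exhaust `G`
    (hTr_surj : ∀ g : G, ∃ ψ : ℝ × ℝ → ℂ, MemH1 D ψ ∧ (∀ x ∈ frontier D, ψ x = 0) ∧
      HasCompactSupport ψ ∧ Tr ψ = g)
    -- interior uniqueness: `k²` is not a Dirichlet eigenvalue of `-Δ` in `D_R`
    (hint : ∀ w : ℝ × ℝ → ℂ, MemH1 {x ∈ D | dist2 x < R} w →
      (∀ x ∈ {x ∈ D | dist2 x < R}, lap w x + (k : ℂ) ^ 2 * w x = 0) →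
      (∀ x ∈ frontier {x ∈ D | dist2 x < R}, w x = 0) →
      ∀ x ∈ {x ∈ D | dist2 x < R}, w x = 0)
    -- exterior uniqueness: no bound states in `Σ_R` under the radiation condition
    (hext : ∀ w : ℝ × ℝ → ℂ, RC w →
      (∀ x ∈ {x ∈ D | R < dist2 x}, lap w x + (k : ℂ) ^ 2 * w x = 0) →
      (∀ x ∈ frontier {x ∈ D | R < dist2 x}, w x = 0) →
      ∀ x ∈ {x ∈ D | R < dist2 x}, w x = 0)
    (φ : G →L[ℂ] ℂ)               -- the density `φ ∈ H^{-1/2}(C_R)`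
    (u : ℝ × ℝ → ℂ)
    (huRC : RC u)
    (huH1 : ∀ h : ℝ, MemH1 {x ∈ D | x.2 < h} u)
    (hubc : ∀ x ∈ frontier D, u x = 0)
    (huhelm : ∀ x ∈ D, dist2 x ≠ R → lap u x + (k : ℂ) ^ 2 * u x = 0)
    -- `u` is the single-layer potential with density `φ`
    (hvar : ∀ ψ : ℝ × ℝ → ℂ, MemH1 D ψ → (∀ x ∈ frontier D, ψ x = 0) →
      HasCompactSupport ψ →
      (∫ x in D, (gradDot u ψ x - (k : ℂ) ^ 2 * u x * conj (ψ x))) = φ (Tr ψ))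
    -- `S φ = u|_{C_R} = 0`
    (hS0 : ∀ x ∈ D, dist2 x = R → u x = 0) :
    (∀ x ∈ D, u x = 0) ∧ φ = 0 := by
  have hbdry : ∀ U : Set (ℝ × ℝ), frontier U ⊆ {x | dist2 x = R} →
      ∀ x ∈ frontier (D ∩ U), u x = 0 := by
    intro U hU x hx
    rcases hDopen.frontier_inter_subset_union U hx with hxD | ⟨hxD, hxU⟩
    exacts [hubc x hxD, hS0 x hxD (hU hxU)]
  have hin : ∀ x ∈ {x ∈ D | dist2 x < R}, u x = 0 :=
    hint u ((huH1 R).mono fun x hx => ⟨hx.1, (snd_le_dist2 x).trans_lt hx.2⟩)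
      (fun x hx => huhelm x hx.1 hx.2.ne)
      (hbdry _ (frontier_lt_subset_eq continuous_dist2 continuous_const))
  have hout : ∀ x ∈ {x ∈ D | R < dist2 x}, u x = 0 :=
    hext u huRC (fun x hx => huhelm x hx.1 hx.2.ne')
      (hbdry _ fun x hx => (frontier_lt_subset_eq continuous_const continuous_dist2 hx).symm)
  have huD : ∀ x ∈ D, u x = 0 := by
    intro x hx
    rcases lt_trichotomy (dist2 x) R with h | h | h
    exacts [hin x ⟨hx, h⟩, hS0 x hx h, hout x ⟨hx, h⟩]
  refine ⟨huD, ContinuousLinearMap.ext fun g => ?_⟩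
  obtain ⟨ψ, hψH1, hψbc, hψcs, rfl⟩ := hTr_surj g
  rw [← hvar ψ hψH1 hψbc hψcs, zero_apply]
  refine setIntegral_eq_zero_of_forall_eq_zero fun x hx => ?_
  rw [gradDot_eq_zero_of_fderiv_eq_zero (fderiv_eq_zero_of_forall_mem_eq_zero hDopen huD hx),
    huD x hx, mul_zero, zero_mul, sub_zero]

/-- injectivity of the single-layer operator. Suppose `k²` is not a
Dirichlet eigenvalue of `-Δ` in `D_R` (interior uniqueness) and the exterior problem in
`Σ_R` with the open waveguide radiation condition `RC` has only the trivial solution.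
If the single-layer potential `u` with density `φ` vanishes on `C_R` (`Sφ = 0`), then `u`
vanishes in all of `D` and consequently `φ = 0`. -/
theorem statement12 {G : Type*} [NormedAddCommGroup G] [NormedSpace ℂ G]
    (k R : ℝ) (hR : π < R)
    (D : Set (ℝ × ℝ)) (hDopen : IsOpen D)
    (RC : (ℝ × ℝ → ℂ) → Prop)     -- the open waveguide radiation condition
    (Tr : (ℝ × ℝ → ℂ) → G)        -- trace onto `H^{1/2}₀(C_R)`
    -- traces of compactly supported `H¹₀(D)`-functions exhaust `G`
    (hTr_surj : ∀ g : G, ∃ ψ : ℝ × ℝ → ℂ, MemH1 D ψ ∧ (∀ x ∈ frontier D, ψ x = 0) ∧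
      HasCompactSupport ψ ∧ Tr ψ = g)
    -- interior uniqueness: `k²` is not a Dirichlet eigenvalue of `-Δ` in `D_R`
    (hint : ∀ w : ℝ × ℝ → ℂ, MemH1 {x ∈ D | dist2 x < R} w →
      (∀ x ∈ {x ∈ D | dist2 x < R}, lap w x + (k : ℂ) ^ 2 * w x = 0) →
      (∀ x ∈ frontier {x ∈ D | dist2 x < R}, w x = 0) →
      ∀ x ∈ {x ∈ D | dist2 x < R}, w x = 0)
    -- exterior uniqueness: no bound states in `Σ_R` under the radiation condition
    (hext : ∀ w : ℝ × ℝ → ℂ, RC w →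
      (∀ x ∈ {x ∈ D | R < dist2 x}, lap w x + (k : ℂ) ^ 2 * w x = 0) →
      (∀ x ∈ frontier {x ∈ D | R < dist2 x}, w x = 0) →
      ∀ x ∈ {x ∈ D | R < dist2 x}, w x = 0)
    (φ : G →L[ℂ] ℂ)               -- the density `φ ∈ H^{-1/2}(C_R)`
    (u : ℝ × ℝ → ℂ)
    (huRC : RC u)
    (huH1 : ∀ h : ℝ, MemH1 {x ∈ D | x.2 < h} u)
    (hubc : ∀ x ∈ frontier D, u x = 0)
    (huhelm : ∀ x ∈ D, dist2 x ≠ R → lap u x + (k : ℂ) ^ 2 * u x = 0)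
    -- `u` is the single-layer potential with density `φ`
    (hvar : ∀ ψ : ℝ × ℝ → ℂ, MemH1 D ψ → (∀ x ∈ frontier D, ψ x = 0) →
      HasCompactSupport ψ →
      (∫ x in D, (gradDot u ψ x - (k : ℂ) ^ 2 * u x * conj (ψ x))) = φ (Tr ψ))
    -- `S φ = u|_{C_R} = 0`
    (hS0 : ∀ x ∈ D, dist2 x = R → u x = 0) :
    (∀ x ∈ D, u x = 0) ∧ φ = 0 :=
  statement12_general k R D hDopen RC Tr hTr_surj hint hext φ u huRC huH1 hubc huhelm hvar hS0
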